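/- Suppose the Walker metric functions A, B, C satisfy (E1) A_{,vv} = B_{,VV}, (E2) 2 B_{,vV} + C_{,vv} = 0, (E3) 2 A_{,vV} + C_{,VV} = 0 and (E7) A_{,vv} + B_{,VV} + C_{,vV} = 2λ for a real constant λ. Then the following derivative relations for the spin coefficients hold: D σ = −Ψ₀; D α' = Ψ₁ = −D τ; D κ' = −Ψ₃; D ρ' = Ψ₂ − λ/3; D ε' = −Ψ₂ − λ/6; D ε̃' = −λ/2; T σ = −Ψ₁; T ρ' = Ψ₃ = −T ε'; T κ' = −Ψ₄; T τ = −Ψ₂ + λ/3; T α' = Ψ₂ + λ/6; and T α̃ = −λ/2. -/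

import Mathlib

noncomputable section

/-- Real-valued functions on ℝ⁴, with coordinates `x 0 = u`, `x 1 = v`, `x 2 = U`, `x 3 = V`. -/
abbrev Fn : Type := (Fin 4 → ℝ) → ℝ

/-- Partial derivative in the `i`-th coordinate direction. -/
def pd (i : Fin 4) (f : Fn) : Fn :=
  fun x => lineDeriv ℝ f x (Pi.single i 1)

/-- ∂/∂u -/ def pu : Fn → Fn := pd 0
/-- ∂/∂v -/ def pv : Fn → Fn := pd 1
/-- ∂/∂U -/ def pU : Fn → Fn := pd 2
/-- ∂/∂V -/ def pV : Fn → Fn := pd 3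

/-- σ = −B_{,v} -/
def sigma (B : Fn) : Fn := fun x => -(pv B x)
/-- τ = (1/2) C_{,v} -/
def tau (C : Fn) : Fn := fun x => (1/2) * pv C x
/-- κ' = −A_{,V} -/
def kappa' (A : Fn) : Fn := fun x => -(pV A x)
/-- ρ' = −(1/2) C_{,V} -/
def rho' (C : Fn) : Fn := fun x => -(1/2) * pV C x
/-- ε' = (1/4) C_{,V} − (1/2) A_{,v} -/
def eps' (A C : Fn) : Fn := fun x => (1/4) * pV C x - (1/2) * pv A x
/-- ε̃' = −(1/4) C_{,V} − (1/2) A_{,v} -/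
def teps' (A C : Fn) : Fn := fun x => -(1/4) * pV C x - (1/2) * pv A x
/-- α̃ = −(1/2) B_{,V} − (1/4) C_{,v} -/
def talpha (B C : Fn) : Fn := fun x => -(1/2) * pV B x - (1/4) * pv C x
/-- α' = (1/2) B_{,V} − (1/4) C_{,v} -/
def alpha' (B C : Fn) : Fn := fun x => (1/2) * pV B x - (1/4) * pv C x

/-- Ψ₀ = B_{,vv} -/
def Psi0 (B : Fn) : Fn := fun x => pv (pv B) x
/-- Ψ₁ = (1/2) B_{,vV} − (1/4) C_{,vv} -/
def Psi1 (B C : Fn) : Fn := fun x => (1/2) * pV (pv B) x - (1/4) * pv (pv C) x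
/-- Ψ₂ = (A_{,vv} + B_{,VV} − 2 C_{,vV})/6 -/
def Psi2 (A B C : Fn) : Fn := fun x => (pv (pv A) x + pV (pV B) x - 2 * pV (pv C) x) / 6
/-- Ψ₃ = (1/2) A_{,vV} − (1/4) C_{,VV} -/
def Psi3 (A C : Fn) : Fn := fun x => (1/2) * pV (pv A) x - (1/4) * pV (pV C) x
/-- Ψ₄ = A_{,VV} -/
def Psi4 (A : Fn) : Fn := fun x => pV (pV A) x

/-- Einstein condition (E1): A_{,vv} = B_{,VV}. -/
def E1 (A B : Fn) : Prop := ∀ x, pv (pv A) x = pV (pV B) x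
/-- Einstein condition (E2): 2 B_{,vV} + C_{,vv} = 0. -/
def E2 (B C : Fn) : Prop := ∀ x, 2 * pV (pv B) x + pv (pv C) x = 0
/-- Einstein condition (E3): 2 A_{,vV} + C_{,VV} = 0. -/
def E3 (A C : Fn) : Prop := ∀ x, 2 * pV (pv A) x + pV (pV C) x = 0

/-- Einstein condition (E7): A_{,vv} + B_{,VV} + C_{,vV} = 2λ. -/
def E7 (A B C : Fn) (lam : ℝ) : Prop :=
  ∀ x, pv (pv A) x + pV (pV B) x + pV (pv C) x = 2 * lam


lemma pd_eq_fderiv {f : Fn} (hf : Differentiable ℝ f) (i : Fin 4) (x) :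
    pd i f x = fderiv ℝ f x (Pi.single i 1) := (hf x).lineDeriv_eq_fderiv

lemma pd_contDiff {f : Fn} (hf : ContDiff ℝ (⊤ : ℕ∞) f) (i : Fin 4) : ContDiff ℝ (⊤ : ℕ∞) (pd i f) := by
  have : pd i f = fun x => fderiv ℝ f x (Pi.single i 1) :=
    funext fun x => pd_eq_fderiv (hf.differentiable (by simp)) i x
  rw [this]
  exact (hf.fderiv_right (by simp)).clm_apply contDiff_const

lemma pd_neg {f : Fn} (hf : Differentiable ℝ f) (i : Fin 4) (x) :
    pd i (fun y => -(f y)) x = -(pd i f x) := by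
  rw [pd_eq_fderiv (f := fun y => -(f y)) hf.neg, pd_eq_fderiv hf, fderiv_fun_neg]; simp

lemma pd_const_mul {f : Fn} (hf : Differentiable ℝ f) (a : ℝ) (i : Fin 4) (x) :
    pd i (fun y => a * f y) x = a * pd i f x := by
  rw [pd_eq_fderiv (hf.const_mul a), pd_eq_fderiv hf, fderiv_const_mul (hf x)]; simp

lemma pd_linsub {f g : Fn} (hf : Differentiable ℝ f) (hg : Differentiable ℝ g)
    (a b : ℝ) (i : Fin 4) (x) :
    pd i (fun y => a * f y - b * g y) x = a * pd i f x - b * pd i g x := by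
  rw [pd_eq_fderiv (f := fun y => a * f y - b * g y) ((hf.const_mul a).sub (hg.const_mul b)),
    pd_eq_fderiv hf, pd_eq_fderiv hg,
    fderiv_fun_sub ((hf x).const_mul a) ((hg x).const_mul b),
    fderiv_const_mul (hf x), fderiv_const_mul (hg x)]
  simp

lemma pd_pd_eq {f : Fn} (hf : ContDiff ℝ (⊤ : ℕ∞) f) (i j : Fin 4) (x) :
    pd i (pd j f) x = fderiv ℝ (fderiv ℝ f) x (Pi.single i 1) (Pi.single j 1) := by
  have hdf : Differentiable ℝ f := hf.differentiable (by simp)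
  have hff : ContDiff ℝ (⊤ : ℕ∞) (fderiv ℝ f) := hf.fderiv_right (by simp)
  have h1 : pd j f = fun y => fderiv ℝ f y (Pi.single j 1) :=
    funext fun y => pd_eq_fderiv hdf j y
  rw [h1, pd_eq_fderiv (((hff.clm_apply contDiff_const :
      ContDiff ℝ (⊤ : ℕ∞) fun y => fderiv ℝ f y (Pi.single j 1))).differentiable (by simp)),
    fderiv_clm_apply (hff.differentiable (by simp) x) (differentiableAt_const _)]
  simp

lemma pd_comm {f : Fn} (hf : ContDiff ℝ (⊤ : ℕ∞) f) (i j : Fin 4) (x) :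
    pd i (pd j f) x = pd j (pd i f) x := by
  have hdf : Differentiable ℝ f := hf.differentiable (by simp)
  have hff : ContDiff ℝ (⊤ : ℕ∞) (fderiv ℝ f) := hf.fderiv_right (by simp)
  rw [pd_pd_eq hf, pd_pd_eq hf]
  exact second_derivative_symmetric (fun y => (hdf y).hasFDerivAt)
    ((hff.differentiable (by simp) x).hasFDerivAt) _ _

/-- derivative relations for spin coefficients of Einstein Walker metrics
satisfying (E1)–(E3) and (E7). -/
theorem stmt16 (A B C : Fn) (lam : ℝ)
    (hA : ContDiff ℝ (⊤ : ℕ∞) A) (hB : ContDiff ℝ (⊤ : ℕ∞) B) (hC : ContDiff ℝ (⊤ : ℕ∞) C)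
    (hE1 : E1 A B) (hE2 : E2 B C) (hE3 : E3 A C) (hE7 : E7 A B C lam) :
    (∀ x, pv (sigma B) x = -(Psi0 B x)) ∧
    (∀ x, pv (alpha' B C) x = Psi1 B C x) ∧
    (∀ x, pv (tau C) x = -(Psi1 B C x)) ∧
    (∀ x, pv (kappa' A) x = -(Psi3 A C x)) ∧
    (∀ x, pv (rho' C) x = Psi2 A B C x - lam/3) ∧
    (∀ x, pv (eps' A C) x = -(Psi2 A B C x) - lam/6) ∧
    (∀ x, pv (teps' A C) x = -lam/2) ∧
    (∀ x, pV (sigma B) x = -(Psi1 B C x)) ∧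
    (∀ x, pV (rho' C) x = Psi3 A C x) ∧
    (∀ x, pV (eps' A C) x = -(Psi3 A C x)) ∧
    (∀ x, pV (kappa' A) x = -(Psi4 A x)) ∧
    (∀ x, pV (tau C) x = -(Psi2 A B C x) + lam/3) ∧
    (∀ x, pV (alpha' B C) x = Psi2 A B C x + lam/6) ∧
    (∀ x, pV (talpha B C) x = -lam/2) :=  by
  have hpvA : Differentiable ℝ (pd 1 A) := (pd_contDiff hA 1).differentiable (by simp)
  have hpVA : Differentiable ℝ (pd 3 A) := (pd_contDiff hA 3).differentiable (by simp)
  have hpvB : Differentiable ℝ (pd 1 B) := (pd_contDiff hB 1).differentiable (by simp)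
  have hpVB : Differentiable ℝ (pd 3 B) := (pd_contDiff hB 3).differentiable (by simp)
  have hpvC : Differentiable ℝ (pd 1 C) := (pd_contDiff hC 1).differentiable (by simp)
  have hpVC : Differentiable ℝ (pd 3 C) := (pd_contDiff hC 3).differentiable (by simp)
  simp only [sigma, tau, kappa', rho', eps', teps', talpha, alpha',
    Psi0, Psi1, Psi2, Psi3, Psi4, pv, pV, E1, E2, E3, E7] at *
  refine ⟨?_, ?_, ?_, ?_, ?_, ?_, ?_, ?_, ?_, ?_, ?_, ?_, ?_, ?_⟩ <;> intro x
  · show pd 1 (fun y => -(pd 1 B y)) x = _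
    rw [pd_neg hpvB]
  · show pd 1 (fun y => 1/2 * pd 3 B y - 1/4 * pd 1 C y) x = _
    rw [pd_linsub hpVB hpvC, pd_comm hB 1 3 x]
  · show pd 1 (fun y => 1/2 * pd 1 C y) x = _
    rw [pd_const_mul hpvC]; linarith [hE2 x]
  · show pd 1 (fun y => -(pd 3 A y)) x = _
    rw [pd_neg hpVA, pd_comm hA 1 3 x]; linarith [hE3 x]
  · show pd 1 (fun y => -(1/2) * pd 3 C y) x = _
    rw [pd_const_mul hpVC, pd_comm hC 1 3 x]; linarith [hE1 x, hE7 x]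
  · show pd 1 (fun y => 1/4 * pd 3 C y - 1/2 * pd 1 A y) x = _
    rw [pd_linsub hpVC hpvA, pd_comm hC 1 3 x]; linarith [hE1 x, hE7 x]
  · show pd 1 (fun y => -(1/4) * pd 3 C y - 1/2 * pd 1 A y) x = _
    rw [pd_linsub hpVC hpvA, pd_comm hC 1 3 x]; linarith [hE1 x, hE7 x]
  · show pd 3 (fun y => -(pd 1 B y)) x = _
    rw [pd_neg hpvB]; linarith [hE2 x]
  · show pd 3 (fun y => -(1/2) * pd 3 C y) x = _
    rw [pd_const_mul hpVC]; linarith [hE3 x]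
  · show pd 3 (fun y => 1/4 * pd 3 C y - 1/2 * pd 1 A y) x = _
    rw [pd_linsub hpVC hpvA]; ring
  · show pd 3 (fun y => -(pd 3 A y)) x = _
    rw [pd_neg hpVA]
  · show pd 3 (fun y => 1/2 * pd 1 C y) x = _
    rw [pd_const_mul hpvC]; linarith [hE1 x, hE7 x, pd_comm hC 3 1 x]
  · show pd 3 (fun y => 1/2 * pd 3 B y - 1/4 * pd 1 C y) x = _
    rw [pd_linsub hpVB hpvC]; linarith [hE1 x, hE7 x, pd_comm hC 3 1 x]
  · show pd 3 (fun y => -(1/2) * pd 3 B y - 1/4 * pd 1 C y) x = _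
    rw [pd_linsub hpVB hpvC]; linarith [hE1 x, hE7 x, pd_comm hC 3 1 x]
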